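/- Fix positive constants ρ, A, I, E, T₀, κ, G. For twice continuously differentiable w, φ : ℝ → ℝ and continuous p_w, p_φ : ℝ → ℝ, define 𝒢(w,p_w,φ,p_φ) := (∂ₓw, p_w, ∂ₓφ, p_φ, ∂ₓw − φ), the multiplication operator 𝒫ᴱ(z₁,…,z₅) := (T₀ z₁, z₂/(ρA), E I z₃, z₄/(ρI), A κ G z₅), and 𝒢†(e₁,…,e₅) := (−∂ₓe₁ − ∂ₓe₅, e₂, −∂ₓe₃ − e₅, e₄). Then 𝒢†( 𝒫ᴱ( 𝒢(w,p_w,φ,p_φ) ) ) = ( −T₀ ∂ₓ²w − A κ G (∂ₓ²w − ∂ₓφ), p_w/(ρA), −E I ∂ₓ²φ − A κ G (∂ₓw − φ), p_φ/(ρI) ), i.e. the implicit effort e^I = 𝒢† e^E equals the vector of variational derivatives (δ_w H^I, δ_{p_w} H^I, δ_φ H^I, δ_{p_φ} H^I) of the implicit Timoshenko Hamiltonian H^I = (1/2)∫( p_w²/(ρA) + p_φ²/(ρI) + T₀(∂ₓw)² + EI(∂ₓφ)² + AκG(∂ₓw−φ)² ) dx. -/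

import Mathlib

/-- Implicit-to-explicit Timoshenko state transformation `𝒢`. -/
noncomputable def Gmap :
    ((ℝ → ℝ) × (ℝ → ℝ) × (ℝ → ℝ) × (ℝ → ℝ)) →
      ((ℝ → ℝ) × (ℝ → ℝ) × (ℝ → ℝ) × (ℝ → ℝ) × (ℝ → ℝ))
  | (w, pw, φ, pφ) => (deriv w, pw, deriv φ, pφ, fun x => deriv w x - φ x)

/-- Explicit constitutive (multiplication) operator `𝒫ᴱ` of the Timoshenko beam. -/
noncomputable def PE (ρ A I E T₀ κ G : ℝ) :
    ((ℝ → ℝ) × (ℝ → ℝ) × (ℝ → ℝ) × (ℝ → ℝ) × (ℝ → ℝ)) →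
      ((ℝ → ℝ) × (ℝ → ℝ) × (ℝ → ℝ) × (ℝ → ℝ) × (ℝ → ℝ))
  | (z₁, z₂, z₃, z₄, z₅) =>
    (fun x => T₀ * z₁ x, fun x => z₂ x / (ρ * A), fun x => E * I * z₃ x,
      fun x => z₄ x / (ρ * I), fun x => A * κ * G * z₅ x)

/-- Formal adjoint `𝒢†` mapping explicit efforts to implicit efforts. -/
noncomputable def Gdag :
    ((ℝ → ℝ) × (ℝ → ℝ) × (ℝ → ℝ) × (ℝ → ℝ) × (ℝ → ℝ)) →
      ((ℝ → ℝ) × (ℝ → ℝ) × (ℝ → ℝ) × (ℝ → ℝ))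
  | (e₁, e₂, e₃, e₄, e₅) =>
    (fun x => -deriv e₁ x - deriv e₅ x, e₂, fun x => -deriv e₃ x - e₅ x, e₄)

theorem stmt16_general (ρ A I E T₀ κ G : ℝ)
    (w φ pw pφ : ℝ → ℝ)
    (hw : ContDiff ℝ 2 w) (hφ : ContDiff ℝ 2 φ) :
    Gdag (PE ρ A I E T₀ κ G (Gmap (w, pw, φ, pφ)))
      = (fun x => -T₀ * deriv (deriv w) x
            - A * κ * G * (deriv (deriv w) x - deriv φ x),
          fun x => pw x / (ρ * A),
          fun x => -E * I * deriv (deriv φ) x - A * κ * G * (deriv w x - φ x),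
          fun x => pφ x / (ρ * I)) := by
  have hw' : Differentiable ℝ (deriv w) := hw.differentiable_deriv_two
  have hφ' : Differentiable ℝ φ := hφ.differentiable two_ne_zero
  simp only [Gmap, PE, Gdag, Prod.mk.injEq]
  refine ⟨funext fun x => ?_, trivial, funext fun x => ?_, trivial⟩
  · rw [deriv_const_mul_field, deriv_const_mul_field,
      deriv_fun_sub (hw' x) (hφ' x)]
    ring
  · rw [deriv_const_mul_field]
    ring

/-- `𝒢† 𝒫ᴱ 𝒢 = 𝒮ᴵ`: the implicit effort `e^I = 𝒢†(𝒫ᴱ(𝒢 z^I))` equals the vector of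
variational derivatives of the implicit Timoshenko Hamiltonian. -/
theorem stmt16 (ρ A I E T₀ κ G : ℝ)
    (hρ : 0 < ρ) (hA : 0 < A) (hI : 0 < I) (hE : 0 < E) (hT : 0 < T₀) (hκ : 0 < κ)
    (hG : 0 < G)
    (w φ pw pφ : ℝ → ℝ)
    (hw : ContDiff ℝ 2 w) (hφ : ContDiff ℝ 2 φ)
    (hpw : Continuous pw) (hpφ : Continuous pφ) :
    Gdag (PE ρ A I E T₀ κ G (Gmap (w, pw, φ, pφ)))
      = (fun x => -T₀ * deriv (deriv w) x
            - A * κ * G * (deriv (deriv w) x - deriv φ x),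
          fun x => pw x / (ρ * A),
          fun x => -E * I * deriv (deriv φ) x - A * κ * G * (deriv w x - φ x),
          fun x => pφ x / (ρ * I)) :=
  stmt16_general ρ A I E T₀ κ G w φ pw pφ hw hφ
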